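/- arXiv:1311.6288 — 3 statements merged into one kernel-verified Lean document; each statement's English description precedes it below -/
import Mathlib

section
/- There exists a constant C > 1 with the following property. For every commutative unital normed ℝ-algebra A with submultiplicative norm, every ℝ-linear derivation D : A → A, every integer N ≥ 3, every real L ≥ 1, and all elements u₁, u₂ ∈ A satisfying ‖Dⁿ uᵢ‖ ≤ L^{n−3/2}·(n−2)! for all integers 2 ≤ n ≤ N and i ∈ {1,2}, one has ‖Dⁿ(u₁u₂)‖ ≤ C·(1 + Σ_{i=1}^{2} Σ_{l=0}^{1} ‖D^l uᵢ‖)²·L^{n−3/2}·(n−2)! for all integers 2 ≤ n ≤ N. -/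
/-!
By the Leibniz rule, `‖Dⁿ(u₁u₂)‖ ≤ ∑ₖ C(n,k) ‖Dᵏu₁‖ ‖Dⁿ⁻ᵏu₂‖`, and with
`M = 1 + ∑ᵢ ∑_{l ≤ 1} ‖Dˡuᵢ‖` every factor is at most `M * w k`, where `w k = L^(k-3/2) (k-2)!`
for `k ≥ 2` and `w 0 = w 1 = 1`. It therefore suffices that `∑ₖ C(n,k) w k w (n-k) ≤ 16 w n`
for `n ≥ 2`. The four edge terms `k ∈ {0, 1, n-1, n}` contribute at most `8 w n`. For
`2 ≤ k ≤ n-2` one has `C(n,k) (k-2)! (n-k-2)! = n! / (k(k-1)(n-k)(n-k-1))`, which is at most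
`4 (n-2)! (1/(k(k-1)) + 1/((n-k)(n-k-1)))` because `n² ≤ 2k² + 2(n-k)²`, while
`L^(k-3/2) L^(n-k-3/2) ≤ L^(n-3/2)`; the telescoping bound `∑ 1/(k(k-1)) ≤ 1` then caps the
interior terms by `8 w n`.
-/

open Finset
open scoped Nat

theorem iterate_map_mul_eq_sum_range {A F : Type*} [Semiring A] [FunLike F A A]
    [AddMonoidHomClass F A A] (D : F) (hD : ∀ x y : A, D (x * y) = x * D y + D x * y)
    (n : ℕ) (x y : A) :
    (⇑D)^[n] (x * y) = ∑ k ∈ range (n + 1), n.choose k • ((⇑D)^[k] x * (⇑D)^[n - k] y) := by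
  rw [← Nat.sum_antidiagonal_eq_sum_range_succ
    (fun i j ↦ n.choose i • ((⇑D)^[i] x * (⇑D)^[j] y))]
  induction n with
  | zero => simp
  | succ n ih =>
    rw [sum_antidiagonal_choose_succ_nsmul (fun i j ↦ (⇑D)^[i] x * (⇑D)^[j] y) n]
    simp only [Function.iterate_succ_apply', ih, map_sum, map_nsmul, hD, smul_add,
      sum_add_distrib]
    congr 1
    refine sum_congr rfl fun ⟨i, j⟩ hij ↦ ?_
    rw [n.choose_symm_of_eq_add (mem_antidiagonal.1 hij).symm]

theorem norm_iterate_map_mul_le {A F : Type*} [SeminormedRing A] [FunLike F A A]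
    [AddMonoidHomClass F A A] (D : F) (hD : ∀ x y : A, D (x * y) = x * D y + D x * y)
    (n : ℕ) (x y : A) :
    ‖(⇑D)^[n] (x * y)‖ ≤
      ∑ k ∈ range (n + 1), n.choose k * (‖(⇑D)^[k] x‖ * ‖(⇑D)^[n - k] y‖) := by
  rw [iterate_map_mul_eq_sum_range D hD]
  refine (norm_sum_le _ _).trans (sum_le_sum fun k _ ↦ norm_nsmul_le.trans ?_)
  gcongr
  exact norm_mul_le _ _

theorem choose_mul_factorial_mul_factorial_le (a b : ℕ) :
    ((a + b + 4).choose (a + 2) * a ! * b ! : ℝ) ≤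
      4 * (a + b + 2)! * (((a + 1) * (a + 2) : ℝ)⁻¹ + ((b + 1) * (b + 2) : ℝ)⁻¹) := by
  have hchoose := Nat.choose_mul_factorial_mul_factorial (n := a + b + 4) (k := a + 2) (by omega)
  rw [show a + b + 4 - (a + 2) = b + 2 by omega] at hchoose
  have hreal : ((a + b + 4).choose (a + 2) * a ! * b ! : ℝ) *
      ((a + 1) * (a + 2) * ((b + 1) * (b + 2))) = (a + b + 2)! * ((a + b + 3) * (a + b + 4)) := by
    have hfact (n : ℕ) : ((n + 2)! : ℝ) = (n + 1) * (n + 2) * n ! := by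
      push_cast [Nat.factorial_succ]
      ring
    have := congrArg (Nat.cast : ℕ → ℝ) hchoose
    rw [Nat.cast_mul, Nat.cast_mul, hfact a, hfact b, show a + b + 4 = a + b + 2 + 2 from rfl,
      hfact (a + b + 2)] at this
    push_cast at this
    linear_combination this
  have hP : (0 : ℝ) < (a + 1) * (a + 2) := by positivity
  have hQ : (0 : ℝ) < (b + 1) * (b + 2) := by positivity
  have hF : (0 : ℝ) ≤ (a + b + 2)! := by positivity
  have hpoly :
      ((a + b + 3) * (a + b + 4) : ℝ) ≤ 4 * ((a + 1) * (a + 2) + (b + 1) * (b + 2)) := by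
    nlinarith [sq_nonneg ((a : ℝ) - b)]
  rw [inv_add_inv hP.ne' hQ.ne', ← mul_div_assoc, le_div_iff₀ (by positivity), hreal]
  nlinarith [mul_le_mul_of_nonneg_left hpoly hF]

theorem sum_range_inv_succ_mul_succ_succ_le_one (m : ℕ) :
    ∑ i ∈ range m, ((i + 1) * (i + 2) : ℝ)⁻¹ ≤ 1 := by
  have htele (i : ℕ) :
      ((i + 1) * (i + 2) : ℝ)⁻¹ = (i + 1 : ℝ)⁻¹ - ((i + 1 : ℕ) + 1 : ℝ)⁻¹ := by
    push_cast
    field_simp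
    ring
  simp_rw [htele]
  rw [sum_range_sub' (fun i : ℕ ↦ (i + 1 : ℝ)⁻¹)]
  simp only [Nat.cast_zero, zero_add, inv_one, sub_le_self_iff]
  positivity

/-- The paper's bound `L ^ (n - 3/2) * (n - 2)!`, set to `1` at the orders `0, 1` so that
`(1 + ∑ᵢ ∑_{l ≤ 1} ‖Dˡ uᵢ‖) * gevreyWeight L n` bounds every derivative of `uᵢ`. -/
noncomputable def gevreyWeight (L : ℝ) : ℕ → ℝ
  | 0 | 1 => 1
  | n + 2 => L ^ ((n : ℝ) + 1 / 2) * n !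

section gevreyWeight

variable {L : ℝ}

theorem gevreyWeight_of_two_le {n : ℕ} (hn : 2 ≤ n) :
    gevreyWeight L n = L ^ ((n : ℝ) - 3 / 2) * (n - 2)! := by
  obtain ⟨k, rfl⟩ := Nat.exists_eq_add_of_le' hn
  rw [gevreyWeight, Nat.add_sub_cancel, Nat.cast_add, Nat.cast_ofNat]
  ring_nf

theorem gevreyWeight_nonneg (hL : 0 ≤ L) (n : ℕ) : 0 ≤ gevreyWeight L n := by
  match n with
  | 0 | 1 => exact zero_le_one
  | n + 2 => exact mul_nonneg (Real.rpow_nonneg hL _) (Nat.cast_nonneg _)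

theorem one_le_gevreyWeight (hL : 1 ≤ L) (n : ℕ) : 1 ≤ gevreyWeight L n := by
  match n with
  | 0 | 1 => exact le_rfl
  | n + 2 =>
    exact one_le_mul_of_one_le_of_one_le (Real.one_le_rpow hL (by positivity))
      (mod_cast Nat.one_le_iff_ne_zero.2 n.factorial_ne_zero)

theorem add_three_mul_gevreyWeight_add_two_le (hL : 1 ≤ L) (n : ℕ) :
    (n + 3 : ℝ) * gevreyWeight L (n + 2) ≤ 3 * gevreyWeight L (n + 3) := by
  have hpow : L ^ ((n : ℝ) + 1 / 2) ≤ L ^ (((n + 1 : ℕ) : ℝ) + 1 / 2) :=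
    Real.rpow_le_rpow_of_exponent_le hL (by push_cast; linarith)
  simp only [gevreyWeight, Nat.factorial_succ, Nat.cast_mul]
  calc (n + 3 : ℝ) * (L ^ ((n : ℝ) + 1 / 2) * n !)
      ≤ (3 * (n + 1)) * (L ^ (((n + 1 : ℕ) : ℝ) + 1 / 2) * n !) := by
        gcongr
        linarith
    _ = _ := by push_cast; ring

theorem choose_mul_gevreyWeight_mul_le (hL : 1 ≤ L) (a b : ℕ) :
    (a + b + 4).choose (a + 2) * (gevreyWeight L (a + 2) * gevreyWeight L (b + 2)) ≤
      4 * gevreyWeight L (a + b + 4) *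
        (((a + 1) * (a + 2) : ℝ)⁻¹ + ((b + 1) * (b + 2) : ℝ)⁻¹) := by
  have hL0 : 0 < L := zero_lt_one.trans_le hL
  have hpow : L ^ ((a : ℝ) + 1 / 2) * L ^ ((b : ℝ) + 1 / 2) ≤
      L ^ (((a + b + 2 : ℕ) : ℝ) + 1 / 2) := by
    rw [← Real.rpow_add hL0]
    exact Real.rpow_le_rpow_of_exponent_le hL (by push_cast; linarith)
  simp only [gevreyWeight]
  calc ((a + b + 4).choose (a + 2) : ℝ) *
        (L ^ ((a : ℝ) + 1 / 2) * a ! * (L ^ ((b : ℝ) + 1 / 2) * b !))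
      = ((a + b + 4).choose (a + 2) * a ! * b ! : ℝ) *
          (L ^ ((a : ℝ) + 1 / 2) * L ^ ((b : ℝ) + 1 / 2)) := by
        ring
    _ ≤ (4 * (a + b + 2)! * (((a + 1) * (a + 2) : ℝ)⁻¹ + ((b + 1) * (b + 2) : ℝ)⁻¹)) *
          L ^ (((a + b + 2 : ℕ) : ℝ) + 1 / 2) :=
        mul_le_mul (choose_mul_factorial_mul_factorial_le a b) hpow (by positivity) (by positivity)
    _ = _ := by ring

theorem sum_range_choose_mul_gevreyWeight_interior_le (hL : 1 ≤ L) (m : ℕ) :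
    ∑ i ∈ range m,
        (m + 3).choose (i + 2) * (gevreyWeight L (i + 2) * gevreyWeight L (m + 3 - (i + 2))) ≤
      8 * gevreyWeight L (m + 3) := by
  set q : ℕ → ℝ := fun i ↦ ((i + 1) * (i + 2) : ℝ)⁻¹
  have hterm : ∀ i ∈ range m,
      (m + 3).choose (i + 2) * (gevreyWeight L (i + 2) * gevreyWeight L (m + 3 - (i + 2))) ≤
        4 * gevreyWeight L (m + 3) * (q i + q (m - 1 - i)) := by
    intro i hi
    obtain ⟨b, rfl⟩ : ∃ b, m = i + b + 1 := ⟨m - i - 1, by rw [mem_range] at hi; omega⟩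
    rw [show i + b + 1 + 3 = i + b + 4 by ring, show i + b + 4 - (i + 2) = b + 2 by omega,
      show i + b + 1 - 1 - i = b by omega]
    exact choose_mul_gevreyWeight_mul_le hL i b
  have hw := gevreyWeight_nonneg (zero_le_one.trans hL) (m + 3)
  calc _ ≤ ∑ i ∈ range m, 4 * gevreyWeight L (m + 3) * (q i + q (m - 1 - i)) :=
        sum_le_sum hterm
    _ = 4 * gevreyWeight L (m + 3) * (2 * ∑ i ∈ range m, q i) := by
        rw [← mul_sum, sum_add_distrib, sum_range_reflect q m, two_mul]
    _ ≤ 8 * gevreyWeight L (m + 3) := by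
        nlinarith [sum_range_inv_succ_mul_succ_succ_le_one m]

theorem sum_range_choose_mul_gevreyWeight_le (hL : 1 ≤ L) {n : ℕ} (hn : 2 ≤ n) :
    ∑ k ∈ range (n + 1), n.choose k * (gevreyWeight L k * gevreyWeight L (n - k)) ≤
      16 * gevreyWeight L n := by
  obtain rfl | ⟨m, rfl⟩ : n = 2 ∨ ∃ m, n = m + 3 :=
    (eq_or_lt_of_le hn).imp Eq.symm fun h ↦ ⟨n - 3, by omega⟩
  · have h2 := one_le_gevreyWeight hL 2
    simp only [Nat.reduceAdd, sum_range_succ, range_one, sum_singleton, Nat.choose_zero_right,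
      Nat.cast_one, gevreyWeight.eq_1, gevreyWeight.eq_2, tsub_zero, one_mul,
      Nat.choose_succ_self_right, Nat.cast_ofNat, Nat.add_one_sub_one, mul_one, Nat.choose_self,
      tsub_self]
    linarith
  · rw [sum_range_succ, sum_range_succ, sum_range_succ', sum_range_succ']
    have hinterior := sum_range_choose_mul_gevreyWeight_interior_le hL m
    have hedge := add_three_mul_gevreyWeight_add_two_le hL m
    simp only [Nat.reduceSubDiff, zero_add, Nat.choose_one_right, Nat.cast_add, Nat.cast_ofNat,
      gevreyWeight.eq_1, gevreyWeight.eq_2, Nat.add_one_sub_one, one_mul, Nat.choose_zero_right,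
      Nat.cast_one, tsub_zero, Nat.choose_succ_self_right, add_tsub_cancel_left, mul_one,
      Nat.choose_self, tsub_self] at hinterior ⊢
    linarith

theorem le_mul_gevreyWeight {a : ℕ → ℝ} {M : ℝ} {N : ℕ} (hL : 0 ≤ L) (hM : 1 ≤ M)
    (h₀ : a 0 ≤ M) (h₁ : a 1 ≤ M)
    (h : ∀ n : ℕ, 2 ≤ n → n ≤ N → a n ≤ L ^ ((n : ℝ) - 3 / 2) * (n - 2)!) :
    ∀ n ≤ N, a n ≤ M * gevreyWeight L n
  | 0, _ => by simpa [gevreyWeight] using h₀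
  | 1, _ => by simpa [gevreyWeight] using h₁
  | n + 2, hn => calc
      a (n + 2) ≤ gevreyWeight L (n + 2) := by
        rw [gevreyWeight_of_two_le le_add_self]
        exact h (n + 2) le_add_self hn
      _ ≤ M * gevreyWeight L (n + 2) := le_mul_of_one_le_left (gevreyWeight_nonneg hL _) hM

end gevreyWeight

theorem norm_iterate_map_mul_le_of_le_gevreyWeight {A F : Type*} [SeminormedRing A]
    [FunLike F A A] [AddMonoidHomClass F A A] (D : F)
    (hD : ∀ x y : A, D (x * y) = x * D y + D x * y) {L M M' : ℝ} (hL : 1 ≤ L) {n : ℕ}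
    (hn : 2 ≤ n) {x y : A} (hx : ∀ k ≤ n, ‖(⇑D)^[k] x‖ ≤ M * gevreyWeight L k)
    (hy : ∀ k ≤ n, ‖(⇑D)^[k] y‖ ≤ M' * gevreyWeight L k) :
    ‖(⇑D)^[n] (x * y)‖ ≤ 16 * (M * M') * gevreyWeight L n := by
  have hM : 0 ≤ M := by simpa [gevreyWeight] using (norm_nonneg _).trans (hx 0 n.zero_le)
  have hM' : 0 ≤ M' := by simpa [gevreyWeight] using (norm_nonneg _).trans (hy 0 n.zero_le)
  calc ‖(⇑D)^[n] (x * y)‖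
      ≤ ∑ k ∈ range (n + 1), n.choose k * (‖(⇑D)^[k] x‖ * ‖(⇑D)^[n - k] y‖) :=
        norm_iterate_map_mul_le D hD n x y
    _ ≤ ∑ k ∈ range (n + 1),
          n.choose k * ((M * gevreyWeight L k) * (M' * gevreyWeight L (n - k))) := by
        refine sum_le_sum fun k hk ↦ ?_
        have hkn : k ≤ n := Nat.lt_succ_iff.1 (mem_range.1 hk)
        gcongr
        exacts [(norm_nonneg _).trans (hx k hkn), hx k hkn, hy _ (n.sub_le k)]
    _ = M * M' *
          ∑ k ∈ range (n + 1), n.choose k * (gevreyWeight L k * gevreyWeight L (n - k)) := by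
        rw [mul_sum]
        exact sum_congr rfl fun k _ ↦ by ring
    _ ≤ M * M' * (16 * gevreyWeight L n) := by
        gcongr
        exact sum_range_choose_mul_gevreyWeight_le hL hn
    _ = 16 * (M * M') * gevreyWeight L n := by ring

/-- estimate (2.10). There is a universal constant `C > 1` such that for
any commutative unital normed `ℝ`-algebra `A` (with submultiplicative norm), any
`ℝ`-linear derivation `D : A → A`, any `N ≥ 3`, `L ≥ 1`, and `u₁, u₂ ∈ A` with
`‖Dⁿ uᵢ‖ ≤ L^(n-3/2) (n-2)!` for `2 ≤ n ≤ N`, one has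
`‖Dⁿ(u₁u₂)‖ ≤ C (1 + Σᵢ Σ_{l≤1} ‖D^l uᵢ‖)² L^(n-3/2) (n-2)!` for `2 ≤ n ≤ N`. -/
theorem derivation_product_estimate_two :
    ∃ C : ℝ, 1 < C ∧
      ∀ (A : Type) [NormedCommRing A] [NormedAlgebra ℝ A] (D : A →ₗ[ℝ] A),
        (∀ x y : A, D (x * y) = x * D y + D x * y) →
        ∀ (N : ℕ), 3 ≤ N → ∀ (L : ℝ), 1 ≤ L → ∀ u₁ u₂ : A,
          (∀ n : ℕ, 2 ≤ n → n ≤ N →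
            ‖(⇑D)^[n] u₁‖ ≤ L ^ ((n : ℝ) - 3 / 2) * (n - 2).factorial) →
          (∀ n : ℕ, 2 ≤ n → n ≤ N →
            ‖(⇑D)^[n] u₂‖ ≤ L ^ ((n : ℝ) - 3 / 2) * (n - 2).factorial) →
          ∀ n : ℕ, 2 ≤ n → n ≤ N →
            ‖(⇑D)^[n] (u₁ * u₂)‖ ≤
              C * (1 + (‖u₁‖ + ‖D u₁‖ + (‖u₂‖ + ‖D u₂‖))) ^ 2 *
                L ^ ((n : ℝ) - 3 / 2) * (n - 2).factorial := by
  refine ⟨16, by norm_num, ?_⟩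
  intro A _ _ D hD N _ L hL u₁ u₂ h₁ h₂ n hn hnN
  set M := 1 + (‖u₁‖ + ‖D u₁‖ + (‖u₂‖ + ‖D u₂‖))
  have hM : 1 ≤ M := le_add_of_nonneg_right (by positivity)
  have hL₀ : 0 ≤ L := zero_le_one.trans hL
  obtain ⟨hu₁₀, hu₁₁, hu₂₀, hu₂₁⟩ : ‖u₁‖ ≤ M ∧ ‖D u₁‖ ≤ M ∧ ‖u₂‖ ≤ M ∧ ‖D u₂‖ ≤ M := by
    refine ⟨?_, ?_, ?_, ?_⟩ <;>
      linarith [norm_nonneg u₁, norm_nonneg (D u₁), norm_nonneg u₂, norm_nonneg (D u₂)]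
  have hu₁ : ∀ k ≤ n, ‖(⇑D)^[k] u₁‖ ≤ M * gevreyWeight L k := fun k hk ↦
    le_mul_gevreyWeight (a := fun k ↦ ‖(⇑D)^[k] u₁‖) hL₀ hM hu₁₀ hu₁₁ h₁ k (hk.trans hnN)
  have hu₂ : ∀ k ≤ n, ‖(⇑D)^[k] u₂‖ ≤ M * gevreyWeight L k := fun k hk ↦
    le_mul_gevreyWeight (a := fun k ↦ ‖(⇑D)^[k] u₂‖) hL₀ hM hu₂₀ hu₂₁ h₂ k (hk.trans hnN)
  calc ‖(⇑D)^[n] (u₁ * u₂)‖ ≤ 16 * (M * M) * gevreyWeight L n :=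
        norm_iterate_map_mul_le_of_le_gevreyWeight D hD hL hn hu₁ hu₂
    _ = 16 * M ^ 2 * L ^ ((n : ℝ) - 3 / 2) * (n - 2).factorial := by
        rw [gevreyWeight_of_two_le hn]
        ring
end

section
/- There exists a constant C₁ > 1 with the following property. For every commutative unital normed ℝ-algebra A with submultiplicative norm, every ℝ-linear derivation D : A → A, every integer N ≥ 3, every real L ≥ 1, and all elements u₁, u₂, u₃ ∈ A satisfying ‖Dⁿ uᵢ‖ ≤ L^{n−1}·(n−2)! for all integers 2 ≤ n ≤ N and all i ∈ {1,2,3}, one has ‖Dⁿ(u₁u₂u₃)‖ ≤ C₁·(1 + Σ_{i=1}^{3} Σ_{l=0}^{1} ‖D^l uᵢ‖)^{6}·L^{n−1}·(n−2)! for all integers 2 ≤ n ≤ N. -/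
/-!
By the Leibniz rule `Dⁿ(xy) = Σ C(n,i) Dⁱx Dⁿ⁻ⁱy`, bounds `‖Dᵏx‖ ≤ a w(k)`, `‖Dᵏy‖ ≤ b w(k)`
multiply to `‖Dⁿ(xy)‖ ≤ C a b w(n)` as soon as `Σ C(n,i) w(i) w(n-i) ≤ C w(n)`.
For `w(k) = L^(k-1) (k-2)!` (with truncated subtraction, so `w 0 = w 1 = 1`) the powers of `L`
combine since `L ≥ 1`. For `i, n-i ≥ 2` the factorial term is
`(n-2)! n(n-1) / (i(i-1)(n-i)(n-i-1)) ≤ 8 (n-2)! (1/(i(i-1)) + 1/((n-i)(n-i-1)))`, and the terms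
with `i ≤ 1` or `n-i ≤ 1` are at most `3 (n-2)!`, so every term is at most
`48 (n-2)! (h(i) + h(n-i))` with `h(i) = 1/((i+1)(i+2))`, whose sum telescopes to at most `1`:
this gives `C = 96`. With `M = 1 + Σ ‖Dˡuᵢ‖` the hypotheses give `‖Dᵏuᵢ‖ ≤ M w(k)` for all
`k ≤ N`, and applying the product estimate twice bounds `‖Dⁿ(u₁u₂u₃)‖` by `96² M³ w(n)`.
-/

open Finset Nat

section Leibniz

variable {A F : Type*} [FunLike F A A]

theorem iterate_map_mul_eq_sum_antidiagonal [NonUnitalNonAssocSemiring A]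
    [AddMonoidHomClass F A A] (D : F) (hD : ∀ x y : A, D (x * y) = x * D y + D x * y)
    (x y : A) (n : ℕ) :
    (⇑D)^[n] (x * y) =
      ∑ ij ∈ antidiagonal n, n.choose ij.1 • ((⇑D)^[ij.1] x * (⇑D)^[ij.2] y) := by
  induction n with
  | zero => simp
  | succ n ih =>
    rw [sum_antidiagonal_choose_succ_nsmul (fun i j => (⇑D)^[i] x * (⇑D)^[j] y),
      Function.iterate_succ_apply', ih, map_sum]
    simp only [map_nsmul, hD, ← Function.iterate_succ_apply' (⇑D), smul_add, sum_add_distrib]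
    congr 1
    refine sum_congr rfl fun ij hij => ?_
    rw [Nat.choose_symm_of_eq_add (mem_antidiagonal.1 hij).symm]

theorem norm_iterate_map_mul_le_s7 [NonUnitalSeminormedRing A] [AddMonoidHomClass F A A] (D : F)
    (hD : ∀ x y : A, D (x * y) = x * D y + D x * y) {w : ℕ → ℝ} {C : ℝ}
    (hw : ∀ n, ∑ ij ∈ antidiagonal n, n.choose ij.1 * (w ij.1 * w ij.2) ≤ C * w n)
    {x y : A} {a b : ℝ} (ha : 0 ≤ a) (hb : 0 ≤ b) {N : ℕ}
    (hx : ∀ k ≤ N, ‖(⇑D)^[k] x‖ ≤ a * w k) (hy : ∀ k ≤ N, ‖(⇑D)^[k] y‖ ≤ b * w k) :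
    ∀ n ≤ N, ‖(⇑D)^[n] (x * y)‖ ≤ C * (a * b) * w n := by
  intro n hn
  have hterm : ∀ ij ∈ antidiagonal n,
      ‖n.choose ij.1 • ((⇑D)^[ij.1] x * (⇑D)^[ij.2] y)‖ ≤
        a * b * (n.choose ij.1 * (w ij.1 * w ij.2)) := by
    intro ij hij
    have hi : ij.1 ≤ N := (HasAntidiagonal.antidiagonal.fst_le hij).trans hn
    have hj : ij.2 ≤ N := (HasAntidiagonal.antidiagonal.snd_le hij).trans hn
    calc ‖n.choose ij.1 • ((⇑D)^[ij.1] x * (⇑D)^[ij.2] y)‖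
        ≤ n.choose ij.1 * (‖(⇑D)^[ij.1] x‖ * ‖(⇑D)^[ij.2] y‖) :=
          norm_nsmul_le.trans (by gcongr; exact norm_mul_le _ _)
      _ ≤ n.choose ij.1 * ((a * w ij.1) * (b * w ij.2)) := by
          gcongr
          · exact (norm_nonneg _).trans (hx _ hi)
          · exact hx _ hi
          · exact hy _ hj
      _ = a * b * (n.choose ij.1 * (w ij.1 * w ij.2)) := by ring
  calc ‖(⇑D)^[n] (x * y)‖
      ≤ ∑ ij ∈ antidiagonal n, ‖n.choose ij.1 • ((⇑D)^[ij.1] x * (⇑D)^[ij.2] y)‖ := by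
        rw [iterate_map_mul_eq_sum_antidiagonal D hD]
        exact norm_sum_le _ _
    _ ≤ a * b * ∑ ij ∈ antidiagonal n, n.choose ij.1 * (w ij.1 * w ij.2) := by
        rw [mul_sum]
        exact sum_le_sum hterm
    _ ≤ C * (a * b) * w n :=
        (mul_le_mul_of_nonneg_left (hw n) (mul_nonneg ha hb)).trans_eq (by ring)

end Leibniz

theorem sum_range_one_div_succ_mul_succ_succ_le_one (n : ℕ) :
    ∑ i ∈ range n, (1 : ℝ) / ((i + 1) * (i + 2)) ≤ 1 := by
  have htel : ∀ i : ℕ, (1 : ℝ) / ((i + 1) * (i + 2)) =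
      -((1 : ℝ) / ((i + 1 : ℕ) + 1) - 1 / ((i : ℕ) + 1)) := by
    intro i
    push_cast
    field_simp
    ring
  rw [sum_congr rfl fun i _ => htel i, sum_neg_distrib,
    sum_range_sub (fun i : ℕ => (1 : ℝ) / ((i : ℕ) + 1))]
  have : (0 : ℝ) ≤ 1 / ((n : ℝ) + 1) := by positivity
  simp only [CharP.cast_eq_zero, zero_add, div_one]
  linarith

theorem add_choose_mul_factorial_sub_two_le_of_le_one {i : ℕ} (hi : i ≤ 1) (j : ℕ) :
    (i + j).choose i * (i - 2)! * (j - 2)! ≤ 3 * (i + j - 2)! := by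
  interval_cases i
  · simp
    omega
  · match j with
    | 0 | 1 | 2 => decide
    | k + 3 =>
      rw [show 1 + (k + 3) - 2 = (k + 1) + 1 by omega, factorial_succ]
      simp only [add_comm 1, choose_one_right, show 1 - 2 = 0 from rfl, factorial_zero,
        show k + 3 - 2 = k + 1 by omega]
      nlinarith [factorial_pos (k + 1)]

theorem one_div_mul_le_six_div {c : ℝ} (hc : 0 ≤ c) :
    1 / ((c + 2) * (c + 1)) ≤ 6 / ((c + 3) * (c + 4)) := by
  rw [div_le_div_iff₀ (by positivity) (by positivity)]
  nlinarith

theorem add_choose_mul_factorial_sub_two_le_of_two_le {i j : ℕ} (hi : 2 ≤ i) (hj : 2 ≤ j) :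
    ((i + j).choose i * (i - 2)! * (j - 2)! : ℝ) ≤
      48 * (i + j - 2)! * (1 / ((i + 1) * (i + 2)) + 1 / ((j + 1) * (j + 2))) := by
  obtain ⟨a, rfl⟩ := Nat.exists_eq_add_of_le' hi
  obtain ⟨b, rfl⟩ := Nat.exists_eq_add_of_le' hj
  have hfact : ∀ m, (m + 2)! = (m + 2) * (m + 1) * m ! := fun m => by
    rw [factorial_succ, factorial_succ]; ring
  have h := add_choose_mul_factorial_mul_factorial (a + 2) (b + 2)
  rw [← choose_symm_add, show a + 2 + (b + 2) = a + b + 2 + 2 by ring, hfact, hfact, hfact] at h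
  rw [show a + 2 + (b + 2) = a + b + 2 + 2 by ring, show a + b + 2 + 2 - 2 = a + b + 2 by omega,
    Nat.add_sub_cancel, Nat.add_sub_cancel]
  set t : ℝ := (((a + b + 2 + 2).choose (a + 2) : ℕ) : ℝ)
  set F : ℝ := (((a + b + 2)! : ℕ) : ℝ)
  set P : ℝ := (a + 2) * (a + 1)
  set Q : ℝ := (b + 2) * (b + 1)
  have hchoose : t * a ! * b ! * (P * Q) = (a + b + 4) * (a + b + 3) * F := by
    have hR := congrArg (Nat.cast : ℕ → ℝ) h
    push_cast at hR
    linear_combination hR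
  have hP : 0 < P := by positivity
  have hQ : 0 < Q := by positivity
  have hsq : ((a : ℝ) + b + 4) * (a + b + 3) ≤ 8 * (P + Q) := by
    nlinarith [sq_nonneg ((a : ℝ) - b)]
  push_cast
  calc t * a ! * b ! = (a + b + 4) * (a + b + 3) * F / (P * Q) := by
        rw [eq_div_iff (by positivity), hchoose]
    _ ≤ 8 * (P + Q) * F / (P * Q) := by gcongr
    _ = 8 * F * (1 / P + 1 / Q) := by
        field_simp
        ring
    _ ≤ 8 * F * (6 / ((a + 3) * (a + 4)) + 6 / ((b + 3) * (b + 4))) := by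
        gcongr 8 * F * (?_ + ?_)
        · exact one_div_mul_le_six_div a.cast_nonneg
        · exact one_div_mul_le_six_div b.cast_nonneg
    _ = 48 * F * (1 / ((a + 2 + 1) * (a + 2 + 2)) + 1 / ((b + 2 + 1) * (b + 2 + 2))) := by ring

theorem add_choose_mul_factorial_sub_two_le (i j : ℕ) :
    ((i + j).choose i * (i - 2)! * (j - 2)! : ℝ) ≤
      48 * (i + j - 2)! * (1 / ((i + 1) * (i + 2)) + 1 / ((j + 1) * (j + 2))) := by
  have boundary : ∀ {i j : ℕ}, i ≤ 1 → ((i + j).choose i * (i - 2)! * (j - 2)! : ℝ) ≤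
      48 * (i + j - 2)! * (1 / ((i + 1) * (i + 2)) + 1 / ((j + 1) * (j + 2))) := by
    intro i j hi
    have h3 : ((i + j).choose i * (i - 2)! * (j - 2)! : ℝ) ≤ 3 * (i + j - 2)! := by
      exact_mod_cast add_choose_mul_factorial_sub_two_le_of_le_one hi j
    have hi' : (i : ℝ) ≤ 1 := by exact_mod_cast hi
    have hR : 1 / 16 ≤ 1 / (((i : ℝ) + 1) * (i + 2)) :=
      one_div_le_one_div_of_le (by positivity) (by nlinarith [i.cast_nonneg (α := ℝ)])
    have hS : 0 ≤ 1 / (((j : ℝ) + 1) * (j + 2)) := by positivity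
    have hF : (0 : ℝ) ≤ (i + j - 2)! := by positivity
    nlinarith
  rcases le_or_gt i 1 with hi | hi
  · exact boundary hi
  rcases le_or_gt j 1 with hj | hj
  · have h := boundary (j := i) hj
    rw [add_comm j i, ← choose_symm_add] at h
    linarith
  exact add_choose_mul_factorial_sub_two_le_of_two_le hi hj

theorem sum_antidiagonal_choose_mul_factorial_sub_two_le (n : ℕ) :
    ∑ ij ∈ antidiagonal n, (n.choose ij.1 * (ij.1 - 2)! * (ij.2 - 2)! : ℝ) ≤ 96 * (n - 2)! := by
  set h : ℕ → ℝ := fun i => 1 / ((i + 1) * (i + 2))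
  have hfst : ∑ ij ∈ antidiagonal n, h ij.1 ≤ 1 := by
    rw [Nat.sum_antidiagonal_eq_sum_range_succ (fun i _ => h i)]
    exact sum_range_one_div_succ_mul_succ_succ_le_one _
  have hsnd : ∑ ij ∈ antidiagonal n, h ij.2 ≤ 1 := by
    rwa [← Nat.sum_antidiagonal_swap] at hfst
  calc ∑ ij ∈ antidiagonal n, (n.choose ij.1 * (ij.1 - 2)! * (ij.2 - 2)! : ℝ)
      ≤ ∑ ij ∈ antidiagonal n, 48 * (n - 2)! * (h ij.1 + h ij.2) := by
        refine sum_le_sum fun ij hij => ?_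
        rw [← mem_antidiagonal.1 hij]
        exact add_choose_mul_factorial_sub_two_le ij.1 ij.2
    _ = 48 * (n - 2)! * (∑ ij ∈ antidiagonal n, h ij.1 + ∑ ij ∈ antidiagonal n, h ij.2) := by
        rw [← sum_add_distrib, mul_sum]
    _ ≤ 48 * (n - 2)! * (1 + 1) := by gcongr
    _ = 96 * (n - 2)! := by ring

theorem sum_antidiagonal_choose_mul_pow_mul_factorial_le {L : ℝ} (hL : 1 ≤ L) (n : ℕ) :
    ∑ ij ∈ antidiagonal n, (n.choose ij.1 : ℝ) *
        ((L ^ (ij.1 - 1) * (ij.1 - 2)!) * (L ^ (ij.2 - 1) * (ij.2 - 2)!)) ≤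
      96 * (L ^ (n - 1) * (n - 2)!) := by
  calc _ ≤ ∑ ij ∈ antidiagonal n,
        L ^ (n - 1) * (n.choose ij.1 * (ij.1 - 2)! * (ij.2 - 2)! : ℝ) := by
        refine sum_le_sum fun ij hij => ?_
        have hpow : L ^ (ij.1 - 1) * L ^ (ij.2 - 1) ≤ L ^ (n - 1) := by
          rw [← pow_add]
          exact pow_le_pow_right₀ hL (by have := mem_antidiagonal.1 hij; omega)
        calc _ = L ^ (ij.1 - 1) * L ^ (ij.2 - 1) *
              (n.choose ij.1 * (ij.1 - 2)! * (ij.2 - 2)! : ℝ) := by ring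
          _ ≤ _ := by gcongr
    _ ≤ L ^ (n - 1) * (96 * (n - 2)!) := by
        rw [← mul_sum]
        gcongr
        exact sum_antidiagonal_choose_mul_factorial_sub_two_le n
    _ = 96 * (L ^ (n - 1) * (n - 2)!) := by ring

/-- Lemma 2.2 (ii). There is a universal constant `C₁ > 1` such that for
any commutative unital normed `ℝ`-algebra `A` (with submultiplicative norm), any
`ℝ`-linear derivation `D : A → A`, any `N ≥ 3`, `L ≥ 1`, and `u₁, u₂, u₃ ∈ A` with
`‖Dⁿ uᵢ‖ ≤ L^(n-1) (n-2)!` for `2 ≤ n ≤ N`, one has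
`‖Dⁿ(u₁u₂u₃)‖ ≤ C₁ (1 + Σᵢ Σ_{l≤1} ‖D^l uᵢ‖)^6 L^(n-1) (n-2)!` for `2 ≤ n ≤ N`. -/
theorem derivation_product_estimate_three :
    ∃ C₁ : ℝ, 1 < C₁ ∧
      ∀ (A : Type) [NormedCommRing A] [NormedAlgebra ℝ A] (D : A →ₗ[ℝ] A),
        (∀ x y : A, D (x * y) = x * D y + D x * y) →
        ∀ (N : ℕ), 3 ≤ N → ∀ (L : ℝ), 1 ≤ L → ∀ u : Fin 3 → A,
          (∀ i : Fin 3, ∀ n : ℕ, 2 ≤ n → n ≤ N →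
            ‖(⇑D)^[n] (u i)‖ ≤ L ^ (n - 1) * (n - 2).factorial) →
          ∀ n : ℕ, 2 ≤ n → n ≤ N →
            ‖(⇑D)^[n] (∏ i, u i)‖ ≤
              C₁ * (1 + ∑ i : Fin 3, ∑ l ∈ Finset.range 2, ‖(⇑D)^[l] (u i)‖) ^ 6 *
                L ^ (n - 1) * (n - 2).factorial := by
  refine ⟨96 * 96, by norm_num, ?_⟩
  intro A _ _ D hD N _ L hL u hu n _ hnN
  set M := 1 + ∑ i : Fin 3, ∑ l ∈ range 2, ‖(⇑D)^[l] (u i)‖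
  have hM : 1 ≤ M := le_add_of_nonneg_right (by positivity)
  have hlow : ∀ i, ∀ l < 2, ‖(⇑D)^[l] (u i)‖ ≤ M := fun i l hl =>
    calc ‖(⇑D)^[l] (u i)‖ ≤ ∑ l ∈ range 2, ‖(⇑D)^[l] (u i)‖ :=
          single_le_sum (f := fun l => ‖(⇑D)^[l] (u i)‖) (fun _ _ => norm_nonneg _)
            (mem_range.2 hl)
      _ ≤ ∑ i : Fin 3, ∑ l ∈ range 2, ‖(⇑D)^[l] (u i)‖ :=
          single_le_sum (f := fun i => ∑ l ∈ range 2, ‖(⇑D)^[l] (u i)‖)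
            (fun _ _ => sum_nonneg fun _ _ => norm_nonneg _) (mem_univ i)
      _ ≤ M := le_add_of_nonneg_left zero_le_one
  have hbound : ∀ i, ∀ k ≤ N, ‖(⇑D)^[k] (u i)‖ ≤ M * (L ^ (k - 1) * (k - 2)!) := by
    intro i k hk
    rcases lt_or_ge k 2 with hk2 | hk2
    · interval_cases k <;> simpa using hlow i _ hk2
    · exact (hu i k hk2 hk).trans (le_mul_of_one_le_left (by positivity) hM)
  have hw := sum_antidiagonal_choose_mul_pow_mul_factorial_le hL
  have h01 := norm_iterate_map_mul_le_s7 D hD hw (by positivity) (by positivity) (hbound 0) (hbound 1)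
  have h012 := norm_iterate_map_mul_le_s7 D hD hw (by positivity) (by positivity) h01 (hbound 2) n hnN
  rw [Fin.prod_univ_three]
  calc _ ≤ 96 * (96 * (M * M) * M) * (L ^ (n - 1) * (n - 2)!) := h012
    _ = 96 * 96 * M ^ 3 * L ^ (n - 1) * (n - 2)! := by ring
    _ ≤ 96 * 96 * M ^ 6 * L ^ (n - 1) * (n - 2)! := by
        gcongr
        norm_num
end

section
/- There exists a constant C > 0 such that for every integer m ≥ 5 one has Σ_{n=2}^{m−3} ( (m−1)! / (n!·(m−1−n)!) )·(n−2)!·(m−n−3)! ≤ C·(m−3)!. -/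
/-!
Since `C(n+k, n) n! k! = (n+k)!`, the summand with `k = m - 1 - n` equals
`(n+k)(n+k-1) / (n(n-1) k(k-1)) · (n+k-2)!`, and for `n, k ≥ 2` this ratio is at most
`8 (1/n² + 1/k²)` (from `n² ≤ 2n(n-1)` and `(n+k)² ≤ 2(n² + k²)`). Summing over `n`, both
`Σ 1/n²` and its reflection `Σ 1/k²` are at most `Σ_{j ≥ 2} 1/j² ≤ 1`, so `C = 16` works.
-/

open Finset Nat

theorem Finset.sum_Icc_reflect {M : Type*} [AddCommMonoid M] (f : ℕ → M) (a b : ℕ) :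
    ∑ n ∈ Icc a b, f (a + b - n) = ∑ n ∈ Icc a b, f n := by
  rw [← Ico_add_one_right_eq_Icc, sum_Ico_reflect f a (by omega : b + 1 ≤ a + b + 1)]
  congr 2 <;> omega

theorem Nat.cast_factorial_eq_mul_factorial_sub_two {n : ℕ} (hn : 2 ≤ n) :
    (n ! : ℝ) = n * (n - 1) * (n - 2)! := by
  obtain ⟨a, rfl⟩ := Nat.exists_eq_add_of_le' hn
  simp only [Nat.add_sub_cancel, Nat.factorial_succ]
  push_cast
  ring

theorem Nat.cast_add_choose_mul_factorial_sub_two_mul_factorial_sub_two {n k : ℕ}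
    (hn : 2 ≤ n) (hk : 2 ≤ k) :
    ((n + k).choose n : ℝ) * (n - 2)! * (k - 2)! =
      (n + k) * (n + k - 1) / (n * (n - 1) * (k * (k - 1))) * (n + k - 2)! := by
  have hchoose : ((n + k).choose n : ℝ) * k ! * n ! = (n + k)! := by
    rw [add_comm n k]
    exact_mod_cast add_choose_mul_factorial_mul_factorial k n
  rw [cast_factorial_eq_mul_factorial_sub_two hn, cast_factorial_eq_mul_factorial_sub_two hk,
    cast_factorial_eq_mul_factorial_sub_two (by omega : 2 ≤ n + k)] at hchoose
  have hn' : (0 : ℝ) < n * (n - 1) := by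
    have : (2 : ℝ) ≤ n := by exact_mod_cast hn
    nlinarith
  have hk' : (0 : ℝ) < k * (k - 1) := by
    have : (2 : ℝ) ≤ k := by exact_mod_cast hk
    nlinarith
  rw [div_mul_eq_mul_div, eq_div_iff (mul_pos hn' hk').ne']
  push_cast at hchoose
  linear_combination hchoose

theorem add_mul_add_sub_one_div_le {x y : ℝ} (hx : 2 ≤ x) (hy : 2 ≤ y) :
    (x + y) * (x + y - 1) / (x * (x - 1) * (y * (y - 1))) ≤ 8 * ((x ^ 2)⁻¹ + (y ^ 2)⁻¹) := by
  have hsq : x ^ 2 * y ^ 2 ≤ 4 * (x * (x - 1) * (y * (y - 1))) := by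
    have hx' : x ^ 2 ≤ 2 * (x * (x - 1)) := by nlinarith
    have hy' : y ^ 2 ≤ 2 * (y * (y - 1)) := by nlinarith
    nlinarith [mul_le_mul hx' hy' (by positivity) (by nlinarith)]
  have hsum : (x + y) * (x + y - 1) ≤ 2 * (x ^ 2 + y ^ 2) := by nlinarith [sq_nonneg (x - y)]
  rw [inv_add_inv (by positivity) (by positivity), ← mul_div_assoc,
    div_le_div_iff₀ (by nlinarith) (by positivity)]
  calc (x + y) * (x + y - 1) * (x ^ 2 * y ^ 2)
      ≤ 2 * (x ^ 2 + y ^ 2) * (4 * (x * (x - 1) * (y * (y - 1)))) := by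
        gcongr
    _ = 8 * (x ^ 2 + y ^ 2) * (x * (x - 1) * (y * (y - 1))) := by ring

theorem sum_Icc_two_inv_sq_le_one (N : ℕ) : ∑ n ∈ Icc 2 N, ((n : ℝ) ^ 2)⁻¹ ≤ 1 := by
  have h := sum_Ioo_inv_sq_le (α := ℝ) 1 (N + 1)
  rw [Ioo_add_one_right_eq_Ioc, ← Icc_add_one_left_eq_Ioc] at h
  norm_num at h
  exact h

/-- There is a constant `C > 0` with
`Σ_{n=2}^{m-3} C(m-1,n) (n-2)! (m-n-3)! ≤ C (m-3)!` for all integers `m ≥ 5`. -/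
theorem binomial_factorial_sum_estimate_three :
    ∃ C : ℝ, 0 < C ∧ ∀ m : ℕ, 5 ≤ m →
      ∑ n ∈ Finset.Icc 2 (m - 3),
          ((m - 1).choose n : ℝ) * (n - 2).factorial * (m - n - 3).factorial ≤
        C * (m - 3).factorial := by
  refine ⟨16, by norm_num, fun m hm => ?_⟩
  calc ∑ n ∈ Icc 2 (m - 3), ((m - 1).choose n : ℝ) * (n - 2)! * (m - n - 3)!
      ≤ ∑ n ∈ Icc 2 (m - 3),
          8 * (((n : ℝ) ^ 2)⁻¹ + (((2 + (m - 3) - n : ℕ) : ℝ) ^ 2)⁻¹) * (m - 3)! := by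
        refine sum_le_sum fun n hn => ?_
        obtain ⟨hn2, hnm⟩ := mem_Icc.mp hn
        obtain ⟨k, rfl⟩ : ∃ k, m = n + k + 1 := ⟨m - n - 1, by omega⟩
        have hk : 2 ≤ k := by omega
        rw [show n + k + 1 - 1 = n + k by omega, show n + k + 1 - n - 3 = k - 2 by omega,
          show 2 + (n + k + 1 - 3) - n = k by omega, show n + k + 1 - 3 = n + k - 2 by omega,
          cast_add_choose_mul_factorial_sub_two_mul_factorial_sub_two hn2 hk]
        gcongr
        exact add_mul_add_sub_one_div_le (by exact_mod_cast hn2) (by exact_mod_cast hk)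
    _ = 16 * (∑ n ∈ Icc 2 (m - 3), ((n : ℝ) ^ 2)⁻¹) * (m - 3)! := by
        rw [← sum_mul, ← mul_sum, sum_add_distrib,
          sum_Icc_reflect (fun n => ((n : ℝ) ^ 2)⁻¹)]
        ring
    _ ≤ 16 * (m - 3)! := by
        grw [sum_Icc_two_inv_sq_le_one, mul_one]
end
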